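/- arXiv:2604.27770 — 2 statements merged into one kernel-verified Lean document; each statement's English description precedes it below -/
import Mathlib

section
/- Let A, B, Q, R, x_ref ∈ ℝ with B > 0, Q > 0, R > 0, A ≠ 1, x_ref ≠ 0. Define S = (−2R(1+A)/B, 2R(1−A)/B) and J_ss(Θ) = (Q + Θ²/(2R)) ((A−1)x_ref/(1 − A − BΘ/(2R)))². If BQ/(A−1) ∉ S, then J_ss is strictly increasing on S, and hence inf over S is approached at the left endpoint Θ = −2R(1+A)/B. -/
/-!
On the stability interval `S` the closed-loop factor `1 - A_Θ` is positive, and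
`J_ss'(Θ) = (A - 1)² x_ref² ((1 - A) Θ + B Q) / (R (1 - A_Θ)³)`.
The affine factor vanishes only at `Θ* = B Q / (A - 1)`, which has the sign of `A - 1`. Since the
right end of `S` is positive when `A < 1` and the left end is negative when `A > 1`, the hypothesis
`Θ* ∉ S` puts `Θ*` on the side of `S` where the factor is positive throughout `S`. So `J_ss` is
strictly increasing on `S`, and being continuous at the left endpoint, its value there is the
infimum over `S`.
-/

open Set

/-- `J_ss(Θ)`; the denominator is `1 - A_Θ` for the closed loop `A_Θ = A + BΘ/(2R)`. -/
noncomputable def steadyStateCost (A B Q R xref Θ : ℝ) : ℝ :=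
  (Q + Θ ^ 2 / (2 * R)) * ((A - 1) * xref / (1 - A - B * Θ / (2 * R))) ^ 2

theorem hasDerivAt_steadyStateCost (A B Q xref : ℝ) {R Θ : ℝ} (hR : R ≠ 0)
    (hd : 1 - A - B * Θ / (2 * R) ≠ 0) :
    HasDerivAt (steadyStateCost A B Q R xref)
      ((A - 1) ^ 2 * xref ^ 2 * ((1 - A) * Θ + B * Q) /
        (R * (1 - A - B * Θ / (2 * R)) ^ 3)) Θ := by
  have hquad : HasDerivAt (fun Θ : ℝ => Q + Θ ^ 2 / (2 * R)) (2 * Θ / (2 * R)) Θ := by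
    simpa using ((hasDerivAt_pow 2 Θ).div_const (2 * R)).const_add Q
  have hdenom : HasDerivAt (fun Θ : ℝ => 1 - A - B * Θ / (2 * R)) (-(B * 1 / (2 * R))) Θ :=
    (((hasDerivAt_id Θ).const_mul B).div_const (2 * R)).const_sub (1 - A)
  have hquot := ((hasDerivAt_const Θ ((A - 1) * xref)).fun_div hdenom hd).fun_pow 2
  refine (hquad.mul hquot).congr_deriv ?_
  set d := 1 - A - B * Θ / (2 * R) with hd_def
  have hlin : 2 * R * d = 2 * R * (1 - A) - B * Θ := by rw [hd_def]; field_simp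
  norm_num
  field_simp
  linear_combination Θ * ((A - 1) * xref) ^ 2 * hlin

theorem steadyStateCost_denom_pos {A B R Θ : ℝ} (hB : 0 < B) (hR : 0 < R)
    (hΘ : Θ < 2 * R * (1 - A) / B) : 0 < 1 - A - B * Θ / (2 * R) := by
  rw [lt_div_iff₀ hB] at hΘ
  have : B * Θ / (2 * R) < 1 - A := by
    rw [div_lt_iff₀ (by positivity)]
    linarith
  linarith

theorem steadyStateCost_deriv_numerator_pos {A B Q R Θ : ℝ} (hB : 0 < B) (hQ : 0 < Q)
    (hR : 0 < R) (hA : A ≠ 1)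
    (hcrit : B * Q / (A - 1) ∉ Ioo (-(2 * R * (1 + A)) / B) (2 * R * (1 - A) / B))
    (hΘ : Θ ∈ Ioo (-(2 * R * (1 + A)) / B) (2 * R * (1 - A) / B)) :
    0 < (1 - A) * Θ + B * Q := by
  obtain ⟨hl, hr⟩ := hΘ
  rcases hA.lt_or_gt with hA | hA
  · have hA' : A - 1 < 0 := by linarith
    have hcrit_le : B * Q / (A - 1) ≤ -(2 * R * (1 + A)) / B := by
      by_contra! h
      refine hcrit ⟨h, lt_trans (div_neg_of_pos_of_neg (by positivity) hA') ?_⟩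
      exact div_pos (by nlinarith) hB
    have := (div_lt_iff_of_neg hA').1 (hcrit_le.trans_lt hl)
    nlinarith
  · have hA' : 0 < A - 1 := by linarith
    have hcrit_ge : 2 * R * (1 - A) / B ≤ B * Q / (A - 1) := by
      by_contra! h
      refine hcrit ⟨lt_trans ?_ (div_pos (by positivity) hA'), h⟩
      exact div_neg_of_neg_of_pos (by nlinarith) hB
    have := (lt_div_iff₀ hA').1 (hr.trans_le hcrit_ge)
    nlinarith

theorem steadyStateCost_strictMonoOn {A B Q R xref : ℝ} (hB : 0 < B) (hQ : 0 < Q) (hR : 0 < R)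
    (hA : A ≠ 1) (hx : xref ≠ 0)
    (hcrit : B * Q / (A - 1) ∉ Ioo (-(2 * R * (1 + A)) / B) (2 * R * (1 - A) / B)) :
    StrictMonoOn (steadyStateCost A B Q R xref)
      (Ioo (-(2 * R * (1 + A)) / B) (2 * R * (1 - A) / B)) := by
  have hderiv : ∀ Θ ∈ Ioo (-(2 * R * (1 + A)) / B) (2 * R * (1 - A) / B),
      HasDerivAt (steadyStateCost A B Q R xref)
        ((A - 1) ^ 2 * xref ^ 2 * ((1 - A) * Θ + B * Q) /
          (R * (1 - A - B * Θ / (2 * R)) ^ 3)) Θ := fun Θ hΘ =>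
    hasDerivAt_steadyStateCost A B Q xref hR.ne' (steadyStateCost_denom_pos hB hR hΘ.2).ne'
  refine strictMonoOn_of_deriv_pos (convex_Ioo _ _)
    (fun Θ hΘ => (hderiv Θ hΘ).continuousAt.continuousWithinAt) fun Θ hΘ => ?_
  rw [interior_Ioo] at hΘ
  rw [(hderiv Θ hΘ).deriv]
  have hc : 0 < (A - 1) ^ 2 * xref ^ 2 := by
    have := sub_ne_zero.2 hA
    positivity
  exact div_pos (mul_pos hc (steadyStateCost_deriv_numerator_pos hB hQ hR hA hcrit hΘ))
    (mul_pos hR (pow_pos (steadyStateCost_denom_pos hB hR hΘ.2) 3))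

/-- Scalar infinite-horizon optimal incentive, boundary case: if the critical
point lies outside the stability interval, the steady-state cost is strictly
increasing there, so its infimum is attained (as a greatest lower bound) at the
left endpoint. -/
theorem stmt8 (A B Q R xref : ℝ) (hB : 0 < B) (hQ : 0 < Q) (hR : 0 < R)
    (hA1 : A ≠ 1) (hx : xref ≠ 0)
    (hout : B * Q / (A - 1) ∉ Set.Ioo (-(2 * R * (1 + A)) / B) (2 * R * (1 - A) / B)) :
    StrictMonoOn
      (fun Θ : ℝ => (Q + Θ ^ 2 / (2 * R)) *
        ((A - 1) * xref / (1 - A - B * Θ / (2 * R))) ^ 2)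
      (Set.Ioo (-(2 * R * (1 + A)) / B) (2 * R * (1 - A) / B)) ∧
    IsGLB
      ((fun Θ : ℝ => (Q + Θ ^ 2 / (2 * R)) *
        ((A - 1) * xref / (1 - A - B * Θ / (2 * R))) ^ 2) ''
        Set.Ioo (-(2 * R * (1 + A)) / B) (2 * R * (1 - A) / B))
      ((fun Θ : ℝ => (Q + Θ ^ 2 / (2 * R)) *
        ((A - 1) * xref / (1 - A - B * Θ / (2 * R))) ^ 2)
        (-(2 * R * (1 + A)) / B)) := by
  show StrictMonoOn (steadyStateCost A B Q R xref) _ ∧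
    IsGLB (steadyStateCost A B Q R xref '' _) (steadyStateCost A B Q R xref _)
  have hlr : -(2 * R * (1 + A)) / B < 2 * R * (1 - A) / B :=
    (div_lt_div_iff_of_pos_right hB).2 (by linarith)
  have hmono := steadyStateCost_strictMonoOn hB hQ hR hA1 hx hout
  have hcont : ContinuousAt (steadyStateCost A B Q R xref) (-(2 * R * (1 + A)) / B) :=
    (hasDerivAt_steadyStateCost A B Q xref hR.ne'
      (steadyStateCost_denom_pos hB hR hlr).ne').continuousAt
  exact ⟨hmono, (isGLB_Ioo hlr).isGLB_of_tendsto hmono.monotoneOn (nonempty_Ioo.2 hlr)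
    (hcont.tendsto.mono_left nhdsWithin_le_nhds)⟩
end

section
/- Let B, Q, R ∈ ℝ with B > 0, Q > 0, R > 0, and let Σ0², μ0 ∈ ℝ with Σ0² + μ0² > 0. Define A_Θ = 1 + BΘ/(2R) and J(Θ) = (Q + Θ²/(2R)) (Σ0² + μ0²)/(1 − A_Θ²) for Θ in S = (−4R/B, 0). Then Θ° = BQ/2 − √(B²Q²/4 + 2QR) is the unique global minimizer of J on S. -/
/-- Scalar infinite-horizon optimal incentive, A = 1:
`Θ° = BQ/2 − √(B²Q²/4 + 2QR)` is the unique global minimizer of the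
infinite-horizon cost on the stability interval `(−4R/B, 0)`. -/
theorem stmt10 (B Q R S0sq μ0 : ℝ) (hB : 0 < B) (hQ : 0 < Q) (hR : 0 < R)
    (hpos : 0 < S0sq + μ0 ^ 2) :
    (B * Q / 2 - Real.sqrt (B ^ 2 * Q ^ 2 / 4 + 2 * Q * R)) ∈
        Set.Ioo (-(4 * R) / B) (0 : ℝ) ∧
    ∀ Θ ∈ Set.Ioo (-(4 * R) / B) (0 : ℝ),
      Θ ≠ B * Q / 2 - Real.sqrt (B ^ 2 * Q ^ 2 / 4 + 2 * Q * R) →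
      (Q + (B * Q / 2 - Real.sqrt (B ^ 2 * Q ^ 2 / 4 + 2 * Q * R)) ^ 2 / (2 * R)) *
          (S0sq + μ0 ^ 2) /
          (1 - (1 + B * (B * Q / 2 - Real.sqrt (B ^ 2 * Q ^ 2 / 4 + 2 * Q * R)) /
            (2 * R)) ^ 2) <
      (Q + Θ ^ 2 / (2 * R)) * (S0sq + μ0 ^ 2) /
          (1 - (1 + B * Θ / (2 * R)) ^ 2) := by
  set K := S0sq + μ0 ^ 2 with hK
  set s := Real.sqrt (B ^ 2 * Q ^ 2 / 4 + 2 * Q * R) with hsdef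
  have hs2 : s ^ 2 = B ^ 2 * Q ^ 2 / 4 + 2 * Q * R := by
    rw [hsdef]; exact Real.sq_sqrt (by positivity)
  have hs0 : 0 < s := by
    rw [hsdef]; exact Real.sqrt_pos.mpr (by positivity)
  set t := B * Q / 2 - s with ht
  have h2s : B * Q - 2 * t = 2 * s := by rw [ht]; ring
  have e : t ^ 2 - B * Q * t - 2 * Q * R = 0 := by
    rw [ht]; linear_combination hs2
  clear_value K s t
  -- t < 0
  have htneg : t < 0 := by
    nlinarith [hs2, hs0, mul_pos hQ hR, mul_pos hB hQ]
  -- t > -(4R)/B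
  have hsu : s < B * Q / 2 + 4 * R / B := by
    rw [hsdef]
    rw [Real.sqrt_lt' (by positivity)]
    have hexp : (B * Q / 2 + 4 * R / B) ^ 2 =
        B ^ 2 * Q ^ 2 / 4 + 4 * Q * R + 16 * (R / B) ^ 2 := by
      field_simp; ring
    rw [hexp]
    nlinarith [mul_pos hQ hR, sq_nonneg (R / B)]
  have hlb : -(4 * R) / B < t := by
    rw [div_lt_iff₀ hB]
    have h := mul_lt_mul_of_pos_right hsu hB
    have hRB : 4 * R / B * B = 4 * R := by field_simp
    nlinarith [h]
  refine ⟨⟨hlb, htneg⟩, ?_⟩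
  intro Θ hΘ hne
  obtain ⟨hΘ1, hΘ2⟩ := hΘ
  have hBΘ : -(4 * R) < B * Θ := by
    have := (div_lt_iff₀ hB).mp hΘ1
    nlinarith
  have hBt : -(4 * R) < B * t := by
    have := (div_lt_iff₀ hB).mp hlb
    nlinarith
  -- positivity of denominators
  have hdΘ : 1 - (1 + B * Θ / (2 * R)) ^ 2 = (-(B * Θ)) * (4 * R + B * Θ) / (4 * R ^ 2) := by
    field_simp; ring
  have hdt : 1 - (1 + B * t / (2 * R)) ^ 2 = (-(B * t)) * (4 * R + B * t) / (4 * R ^ 2) := by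
    field_simp; ring
  have hdΘpos : 0 < 1 - (1 + B * Θ / (2 * R)) ^ 2 := by
    rw [hdΘ]
    have h1 : 0 < B * -Θ := mul_pos hB (by linarith)
    apply div_pos (mul_pos (by linarith) (by linarith)) (by positivity)
  have hdtpos : 0 < 1 - (1 + B * t / (2 * R)) ^ 2 := by
    rw [hdt]
    have h1 : 0 < B * -t := mul_pos hB (by linarith)
    apply div_pos (mul_pos (by linarith) (by linarith)) (by positivity)
  have hsq : 0 < (Θ - t) ^ 2 := by
    have : Θ - t ≠ 0 := sub_ne_zero.mpr hne
    positivity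
  have hprod : 0 < R * (s * (Θ - t) ^ 2) := mul_pos hR (mul_pos hs0 hsq)
  have eΘR : R * Θ * (t ^ 2 - B * Q * t - 2 * Q * R) = 0 := by
    rw [e]; ring
  have etR : R * t * (t ^ 2 - B * Q * t - 2 * Q * R) = 0 := by
    rw [e]; ring
  have e2s : R * (Θ - t) ^ 2 * (B * Q - 2 * t - 2 * s) = 0 := by
    have : B * Q - 2 * t - 2 * s = 0 := by rw [h2s]; ring
    rw [this]; ring
  have hp2 : 0 < 4 * R * B * s * (Θ - t) ^ 2 :=
    mul_pos (mul_pos (mul_pos (mul_pos (by norm_num : (0:ℝ) < 4) hR) hB) hs0) hsq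
  have hg : (2 * R * Q + Θ ^ 2) * ((-(B * t)) * (4 * R + B * t)) -
      (2 * R * Q + t ^ 2) * ((-(B * Θ)) * (4 * R + B * Θ)) =
      4 * R * B * s * (Θ - t) ^ 2 := by
    linear_combination (2 * R * B * (Θ - t) ^ 2) * h2s - (4 * R * B * (Θ - t)) * e
  have hpoly : (2 * R * Q + t ^ 2) * ((-(B * Θ)) * (4 * R + B * Θ)) <
      (2 * R * Q + Θ ^ 2) * ((-(B * t)) * (4 * R + B * t)) := by
    linarith [hg, hp2]
  rw [div_lt_div_iff₀ hdtpos hdΘpos, hdΘ, hdt]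
  have hKR : (0 : ℝ) < K / (8 * R ^ 3) := by positivity
  have heq1 : (Q + t ^ 2 / (2 * R)) * K * ((-(B * Θ)) * (4 * R + B * Θ) / (4 * R ^ 2)) =
      K / (8 * R ^ 3) * ((2 * R * Q + t ^ 2) * ((-(B * Θ)) * (4 * R + B * Θ))) := by
    field_simp; ring
  have heq2 : (Q + Θ ^ 2 / (2 * R)) * K * ((-(B * t)) * (4 * R + B * t) / (4 * R ^ 2)) =
      K / (8 * R ^ 3) * ((2 * R * Q + Θ ^ 2) * ((-(B * t)) * (4 * R + B * t))) := by
    field_simp; ring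
  rw [heq1, heq2]
  exact mul_lt_mul_of_pos_left hpoly hKR
end
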